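/- arXiv:1302.4333 — 2 statements merged into one kernel-verified Lean document; each statement's English description precedes it below -/
import Mathlib

section
/- Let f be monostable and s : [L, ∞) → [0,1] a bounded C² solution of s'' + f(s) = 0 with s(L) = β ∈ (0,1] and 0 < s(x) ≤ 1. Then lim_{x→∞} s(x) = 1. -/
/-!
Since `f ≥ 0` on `(0, 1]`, the solution is concave; a concave function that stays positive on a
half-line cannot decrease anywhere, so `s' ≥ 0` and `s` increases to a limit `ℓ ∈ [s L, 1]`.
If `ℓ < 1`, then `f ∘ s` is bounded below by the positive minimum of `f` on `[s L, ℓ]`,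
so `s'` decreases at a linear rate and eventually becomes negative, which is impossible.
-/

open Set Filter Topology

section HalfLine

variable {g g' g'' : ℝ → ℝ} {a : ℝ}

lemma monotoneOn_Ici_of_hasDerivAt_nonneg (hg : ∀ x ∈ Ici a, HasDerivAt g (g' x) x)
    (hg' : ∀ x ∈ Ici a, 0 ≤ g' x) : MonotoneOn g (Ici a) :=
  monotoneOn_of_hasDerivWithinAt_nonneg (convex_Ici a)
    (fun x hx => (hg x hx).continuousAt.continuousWithinAt)
    (fun x hx => (hg x (interior_subset hx)).hasDerivWithinAt)
    (fun x hx => hg' x (interior_subset hx))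

lemma le_add_mul_sub_of_hasDerivAt_le {c x : ℝ} (hg : ∀ x ∈ Ici a, HasDerivAt g (g' x) x)
    (hle : ∀ x ∈ Ici a, g' x ≤ c) (hx : a ≤ x) : g x ≤ g a + c * (x - a) := by
  have hmono : MonotoneOn (fun y => c * y - g y) (Ici a) :=
    monotoneOn_Ici_of_hasDerivAt_nonneg
      (fun y hy => ((hasDerivAt_id' y).const_mul c).sub (hg y hy) |>.congr_deriv (by ring))
      (fun y hy => sub_nonneg.2 (hle y hy))
  have := hmono self_mem_Ici hx hx
  linarith

lemma tendsto_atBot_of_hasDerivAt_le_neg {c : ℝ} (hg : ∀ x ∈ Ici a, HasDerivAt g (g' x) x)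
    (hle : ∀ x ∈ Ici a, g' x ≤ c) (hc : c < 0) : Tendsto g atTop atBot := by
  have hlin : Tendsto (fun x => g a + c * (x - a)) atTop atBot :=
    tendsto_atBot_add_const_left _ _
      ((tendsto_atTop_add_const_right _ (-a) tendsto_id).const_mul_atTop_of_neg hc)
  refine tendsto_atBot_mono' _ ?_ hlin
  filter_upwards [eventually_ge_atTop a] with x hx
  exact le_add_mul_sub_of_hasDerivAt_le hg hle hx

lemma hasDerivAt_nonneg_of_concave_of_bddBelow {b x₀ : ℝ}
    (hg : ∀ x ∈ Ici a, HasDerivAt g (g' x) x) (hg' : ∀ x ∈ Ici a, HasDerivAt g' (g'' x) x)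
    (hg'' : ∀ x ∈ Ici a, g'' x ≤ 0) (hb : ∀ x ∈ Ici a, b ≤ g x) (hx₀ : a ≤ x₀) :
    0 ≤ g' x₀ := by
  by_contra! hneg
  have hanti : ∀ x ∈ Ici x₀, g' x ≤ g' x₀ := fun x hx => by
    simpa using le_add_mul_sub_of_hasDerivAt_le (fun y hy => hg' y (hx₀.trans hy))
      (fun y hy => hg'' y (hx₀.trans hy)) hx
  have hbot := tendsto_atBot_of_hasDerivAt_le_neg (fun y hy => hg y (hx₀.trans hy)) hanti hneg
  obtain ⟨x, hxb, hxa⟩ := ((hbot.eventually (eventually_lt_atBot b)).and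
    (eventually_ge_atTop a)).exists
  exact (hb x hxa).not_gt hxb

lemma MonotoneOn.tendsto_atTop_sSup_image_Ici (hg : MonotoneOn g (Ici a))
    (hb : BddAbove (g '' Ici a)) : Tendsto g atTop (𝓝 (sSup (g '' Ici a))) := by
  have hmono : Monotone (fun x => g (max x a)) := fun x y hxy =>
    hg (le_max_right x a) (le_max_right y a) (max_le_max hxy le_rfl)
  have hrange : range (fun x => g (max x a)) = g '' Ici a := by
    ext y
    constructor
    · rintro ⟨x, rfl⟩
      exact ⟨max x a, le_max_right x a, rfl⟩
    · rintro ⟨x, hx, rfl⟩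
      exact ⟨x, by simp only [max_eq_left (mem_Ici.1 hx)]⟩
  have hlim := tendsto_atTop_ciSup hmono (hrange ▸ hb)
  rw [iSup, hrange] at hlim
  refine hlim.congr' ?_
  filter_upwards [eventually_ge_atTop a] with x hx
  rw [max_eq_left hx]

end HalfLine

theorem stmt_17_general (f : ℝ → ℝ) (L : ℝ) (hf : Continuous f)
    (hf1 : f 1 = 0)
    (hpos : ∀ u ∈ Set.Ioo (0:ℝ) 1, 0 < f u)
    (s s' : ℝ → ℝ)
    (hds : ∀ x ∈ Set.Ici L, HasDerivAt s (s' x) x)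
    (hds' : ∀ x ∈ Set.Ici L, HasDerivAt s' (-(f (s x))) x)
    (hrange : ∀ x ∈ Set.Ici L, 0 < s x ∧ s x ≤ 1) :
    Filter.Tendsto s Filter.atTop (nhds 1) := by
  have hfs : ∀ x ∈ Ici L, 0 ≤ f (s x) := fun x hx =>
    (hrange x hx).2.eq_or_lt.elim (fun h => h ▸ hf1.ge)
      fun h => (hpos _ ⟨(hrange x hx).1, h⟩).le
  have hs' : ∀ x ∈ Ici L, 0 ≤ s' x := fun x hx =>
    hasDerivAt_nonneg_of_concave_of_bddBelow hds hds' (fun y hy => neg_nonpos.2 (hfs y hy))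
      (fun y hy => (hrange y hy).1.le) hx
  have hmono := monotoneOn_Ici_of_hasDerivAt_nonneg hds hs'
  have hbdd : BddAbove (s '' Ici L) := ⟨1, forall_mem_image.2 fun x hx => (hrange x hx).2⟩
  set ℓ := sSup (s '' Ici L)
  have hle : ∀ x ∈ Ici L, s x ≤ ℓ := fun x hx => le_csSup hbdd (mem_image_of_mem s hx)
  have hℓ1 : ℓ ≤ 1 :=
    csSup_le (nonempty_Ici.image s) (forall_mem_image.2 fun x hx => (hrange x hx).2)
  suffices ¬ ℓ < 1 from
    le_antisymm hℓ1 (not_lt.1 this) ▸ hmono.tendsto_atTop_sSup_image_Ici hbdd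
  intro hℓ
  obtain ⟨m, hm, hfm⟩ := isCompact_Icc.exists_forall_le' hf.continuousOn
    fun u (hu : u ∈ Icc (s L) ℓ) =>
      hpos u ⟨(hrange L self_mem_Ici).1.trans_le hu.1, hu.2.trans_lt hℓ⟩
  have hbot := tendsto_atBot_of_hasDerivAt_le_neg hds'
    (fun x hx => neg_le_neg (hfm _ ⟨hmono self_mem_Ici hx hx, hle x hx⟩)) (neg_neg_of_pos hm)
  obtain ⟨x, hxb, hxL⟩ := ((hbot.eventually (eventually_lt_atBot 0)).and
    (eventually_ge_atTop L)).exists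
  exact (hs' x hxL).not_gt hxb

theorem stmt_17 (f : ℝ → ℝ) (L β₀ : ℝ) (hf : Continuous f)
    (hf0 : f 0 = 0) (hf1 : f 1 = 0)
    (hpos : ∀ u ∈ Set.Ioo (0:ℝ) 1, 0 < f u)
    (s s' : ℝ → ℝ)
    (hds : ∀ x ∈ Set.Ici L, HasDerivAt s (s' x) x)
    (hds' : ∀ x ∈ Set.Ici L, HasDerivAt s' (-(f (s x))) x)
    (hsL : s L = β₀) (hβ₀ : β₀ ∈ Set.Ioc (0:ℝ) 1)
    (hrange : ∀ x ∈ Set.Ici L, 0 < s x ∧ s x ≤ 1) :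
    Filter.Tendsto s Filter.atTop (nhds 1) :=
  stmt_17_general f L hf hf1 hpos s s' hds hds' hrange
end

section
/- Define f(s) = -s + α(1 - e^{-β(s - s_b)}) for s ≥ s_b and f(s) = -s for s < s_b, with α, β > 0 and 0 < s_b. Assume f(1) = 0 and f'(0) = -1 < 0. Then f(0) = 0, and if additionally there exists a ∈ (s_b, 1) with f(a) = 0 and αβ e^{-β(a - s_b)} > 1, then f has exactly three zeros 0, a, 1 on [0,1] and f < 0 on (0,a), f > 0 on (a,1). -/
/-!
On `[s_b, ∞)` the function is `-s + α (1 - e^{-β (s - s_b)})`, which is strictly concave because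
its derivative `-1 + αβ e^{-β (s - s_b)}` is strictly decreasing. A strictly concave function
vanishing at `a < 1` is positive strictly between them and negative to the left of `a`; on
`[0, s_b)` the function is `-s`, negative except at `0`.
-/

open Set Real

section SignOfConcave

variable {𝕜 : Type*} [Field 𝕜] [LinearOrder 𝕜] [IsStrictOrderedRing 𝕜] {s : Set 𝕜} {g : 𝕜 → 𝕜}
  {a b x : 𝕜}

theorem StrictConcaveOn.pos_of_mem_Ioo_of_eq_zero (hg : StrictConcaveOn 𝕜 s g) (ha : a ∈ s)
    (hb : b ∈ s) (hga : g a = 0) (hgb : g b = 0) (hx : x ∈ Ioo a b) : 0 < g x := by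
  have hslope := hg.slope_anti_adjacent ha hb hx.1 hx.2
  rw [hga, hgb, sub_zero, zero_sub, neg_div, neg_lt_iff_pos_add] at hslope
  by_contra! hgx
  have hleft := div_nonpos_of_nonpos_of_nonneg hgx (sub_pos.2 hx.1).le
  have hright := div_nonpos_of_nonpos_of_nonneg hgx (sub_pos.2 hx.2).le
  linarith

theorem StrictConcaveOn.neg_of_lt_of_eq_zero (hg : StrictConcaveOn 𝕜 s g) (hx : x ∈ s)
    (hb : b ∈ s) (hga : g a = 0) (hgb : g b = 0) (hxa : x < a) (hab : a < b) : g x < 0 := by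
  have hslope := hg.slope_anti_adjacent hx hb hxa hab
  rw [hga, hgb, sub_self, zero_div, zero_sub, neg_div, neg_pos] at hslope
  simpa using (div_lt_iff₀ (sub_pos.2 hxa)).1 hslope

end SignOfConcave

theorem eq_zero_iff_of_neg_on_Ioo_of_pos_on_Ioo {ι : Type*} [LinearOrder ι] {f : ι → ℝ}
    {a b c s : ι} (hneg : ∀ s ∈ Ioo a b, f s < 0) (hpos : ∀ s ∈ Ioo b c, 0 < f s)
    (ha : f a = 0) (hb : f b = 0) (hc : f c = 0) (hs : s ∈ Icc a c) :
    f s = 0 ↔ s = a ∨ s = b ∨ s = c := by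
  refine ⟨fun hfs => ?_, by rintro (rfl | rfl | rfl) <;> assumption⟩
  by_contra! ⟨hsa, hsb, hsc⟩
  rcases lt_or_gt_of_ne hsb with hlt | hgt
  · exact (hneg s ⟨lt_of_le_of_ne hs.1 hsa.symm, hlt⟩).ne hfs
  · exact (hpos s ⟨hgt, lt_of_le_of_ne hs.2 hsc⟩).ne' hfs

/-- The paper's `-s + α Λ(s - s_b)` on `s ≥ s_b`. -/
noncomputable def expBranch (α β s_b s : ℝ) : ℝ := -s + α * (1 - exp (-β * (s - s_b)))

theorem hasDerivAt_expBranch (α β s_b x : ℝ) :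
    HasDerivAt (expBranch α β s_b) (-1 + α * β * exp (-β * (x - s_b))) x := by
  have hlin : HasDerivAt (fun s => -β * (s - s_b)) (-β) x := by
    simpa using ((hasDerivAt_id x).sub_const s_b).const_mul (-β)
  exact ((hasDerivAt_id x).neg.add (((hasDerivAt_const x 1).sub hlin.exp).const_mul α)).congr_deriv
    (by ring)

theorem strictConcaveOn_expBranch {α β : ℝ} (hα : 0 < α) (hβ : 0 < β) (s_b : ℝ) :
    StrictConcaveOn ℝ univ (expBranch α β s_b) := by
  refine StrictAnti.strictConcaveOn_univ_of_deriv
    (continuous_iff_continuousAt.2 fun x => (hasDerivAt_expBranch α β s_b x).continuousAt) ?_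
  intro x y hxy
  simp only [(hasDerivAt_expBranch α β s_b _).deriv]
  have hexp : exp (-β * (y - s_b)) < exp (-β * (x - s_b)) := exp_lt_exp.2 (by nlinarith)
  have := mul_lt_mul_of_pos_left hexp (mul_pos hα hβ)
  linarith

theorem stmt_18_general (α β s_b a : ℝ) (hα : 0 < α) (hβ : 0 < β)
    (hsb0 : 0 < s_b) (hsb1 : s_b < 1)
    (f : ℝ → ℝ)
    (hf : ∀ s, f s = if s < s_b then -s else -s + α * (1 - Real.exp (-β * (s - s_b))))
    (hf1 : f 1 = 0)
    (ha : a ∈ Set.Ioo s_b 1) (hfa : f a = 0) :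
    f 0 = 0 ∧
    (∀ s ∈ Set.Icc (0:ℝ) 1, f s = 0 ↔ (s = 0 ∨ s = a ∨ s = 1)) ∧
    (∀ s ∈ Set.Ioo 0 a, f s < 0) ∧ (∀ s ∈ Set.Ioo a 1, 0 < f s) := by
  have hf_branch : ∀ s, s_b ≤ s → f s = expBranch α β s_b s := fun s hs => by
    rw [hf, if_neg hs.not_gt, expBranch]
  have hconc := strictConcaveOn_expBranch hα hβ s_b
  have hga : expBranch α β s_b a = 0 := hf_branch a ha.1.le ▸ hfa
  have hg1 : expBranch α β s_b 1 = 0 := hf_branch 1 hsb1.le ▸ hf1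
  have hf0 : f 0 = 0 := by rw [hf, if_pos hsb0, neg_zero]
  have hneg : ∀ s ∈ Ioo 0 a, f s < 0 := by
    rintro s ⟨hs0, hsa⟩
    rcases lt_or_ge s s_b with hlt | hge
    · rw [hf, if_pos hlt]
      exact neg_neg_of_pos hs0
    · rw [hf_branch s hge]
      exact hconc.neg_of_lt_of_eq_zero (mem_univ s) (mem_univ 1) hga hg1 hsa ha.2
  have hpos : ∀ s ∈ Ioo a 1, 0 < f s := fun s hs => by
    rw [hf_branch s (ha.1.trans hs.1).le]
    exact hconc.pos_of_mem_Ioo_of_eq_zero (mem_univ a) (mem_univ 1) hga hg1 hs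
  exact ⟨hf0, fun s hs => eq_zero_iff_of_neg_on_Ioo_of_pos_on_Ioo hneg hpos hf0 hfa hf1 hs,
    hneg, hpos⟩

theorem stmt_18 (α β s_b a : ℝ) (hα : 0 < α) (hβ : 0 < β)
    (hsb0 : 0 < s_b) (hsb1 : s_b < 1)
    (f : ℝ → ℝ)
    (hf : ∀ s, f s = if s < s_b then -s else -s + α * (1 - Real.exp (-β * (s - s_b))))
    (hf1 : f 1 = 0)
    (ha : a ∈ Set.Ioo s_b 1) (hfa : f a = 0)
    (hslope : 1 < α * β * Real.exp (-β * (a - s_b)))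
    (hf1' : α * β * Real.exp (-β * (1 - s_b)) < 1) :
    f 0 = 0 ∧
    (∀ s ∈ Set.Icc (0:ℝ) 1, f s = 0 ↔ (s = 0 ∨ s = a ∨ s = 1)) ∧
    (∀ s ∈ Set.Ioo 0 a, f s < 0) ∧ (∀ s ∈ Set.Ioo a 1, 0 < f s) :=
  stmt_18_general α β s_b a hα hβ hsb0 hsb1 f hf hf1 ha hfa
end
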